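/- Let G be a group, let g ≥ 3, and let a_1,…,a_{g−1}, y be elements of G satisfying: a_i a_j = a_j a_i for |i−j|>1; a_i a_{i+1} a_i = a_{i+1} a_i a_{i+1} for i=1,…,g−2; a_i y = y a_i for i=3,…,g−1; and a_1 y = y a_1^{−1}. Set M = a_1⋯a_{g−1}, u_1 = a_1 y, and u_i = M^{i−1} u_1^{(−1)^{i−1}} M^{−(i−1)} for i = 2,…,g−1. Then for each i = 1,…,g−2, the relation (C3) a_{i+1} u_i u_{i+1} = u_i u_{i+1} a_i holds if and only if relation (C2') holds: a_2 (y a_2 y^{−1}) = (y a_2 y^{−1}) a_2. -/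

import Mathlib

/-!
Conjugation by `M = a₁ ⋯ a_{g-1}` sends `aⱼ` to `aⱼ₊₁`, and `u_i u_{i+1}` is the
`M^{i-1}`-conjugate of the commutator `⁅v, M⁆` with `v = u₁^{±1}`; hence (C3) for `i` is the
`M^{i-1}`-conjugate of the statement that `⁅v, M⁆` conjugates `a₁` to `a₂`. Writing
`M = a₁ a₂ N` with `N` commuting with `a₁` and `y`, one computes
`⁅a₁ y, M⁆ = (y a₂ y⁻¹) (a₁ a₂ a₁)⁻¹`, and by the braid relation `(a₁ a₂ a₁)⁻¹` conjugates `a₁`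
to `a₂`, which leaves exactly the commutation of `a₂` with `y a₂ y⁻¹`. Since
`u₁⁻¹ = a₁ y⁻¹` and `y⁻¹` satisfies the same relations as `y`, the case `v = u₁⁻¹` is the same
computation.
-/

open scoped commutatorElement

section

variable {G : Type*} [Group G]

lemma commute_prod_map_range' {x : G} {a : ℕ → G} {s m : ℕ}
    (h : ∀ k, s ≤ k → k < s + m → Commute x (a k)) :
    Commute x ((List.range' s m).map a).prod :=
  Commute.list_prod_right _ _ fun z hz => by
    obtain ⟨k, hk, rfl⟩ := List.mem_map.1 hz
    rw [List.mem_range'_1] at hk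
    exact h k hk.1 hk.2

lemma prod_map_range'_one_add_two_add (a : ℕ → G) (p r : ℕ) :
    ((List.range' 1 (p + 2 + r)).map a).prod =
      ((List.range' 1 p).map a).prod * (a (p + 1) * a (p + 2)) *
        ((List.range' (p + 3) r).map a).prod := by
  rw [add_assoc, ← List.range'_append_1, add_comm 1 p, add_comm 2 r]
  simp [List.range'_succ, mul_assoc]

structure BraidRelations (a : ℕ → G) (n : ℕ) : Prop where
  comm : ∀ i j, 1 ≤ i → j ≤ n → i + 1 < j → a i * a j = a j * a i
  braid : ∀ i, 1 ≤ i → i + 1 ≤ n → a i * a (i + 1) * a i = a (i + 1) * a i * a (i + 1)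

lemma BraidRelations.semiconjBy_prod {a : ℕ → G} {n : ℕ} (ha : BraidRelations a n) {j : ℕ}
    (hj : 1 ≤ j) (hjn : j + 1 ≤ n) :
    SemiconjBy ((List.range' 1 n).map a).prod (a j) (a (j + 1)) := by
  obtain ⟨p, rfl⟩ : ∃ p, j = p + 1 := ⟨j - 1, by omega⟩
  obtain ⟨r, rfl⟩ : ∃ r, n = p + 2 + r := ⟨n - p - 2, by omega⟩
  rw [prod_map_range'_one_add_two_add]
  set P := ((List.range' 1 p).map a).prod
  set S := ((List.range' (p + 3) r).map a).prod
  have hP : Commute (a (p + 2)) P := commute_prod_map_range' fun k hk hkp =>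
    (ha.comm k (p + 2) hk (by omega) (by omega)).symm
  have hS : Commute (a (p + 1)) S := commute_prod_map_range' fun k hk hkr =>
    ha.comm (p + 1) k (by omega) (by omega) (by omega)
  have hb := ha.braid (p + 1) (by omega) (by omega)
  calc P * (a (p + 1) * a (p + 2)) * S * a (p + 1)
      = P * (a (p + 1) * a (p + 2) * a (p + 1)) * S := by simp only [mul_assoc, hS.eq]
    _ = P * (a (p + 2) * a (p + 1) * a (p + 2)) * S := by rw [hb]
    _ = a (p + 2) * (P * (a (p + 1) * a (p + 2)) * S) := by simp only [← mul_assoc, hP.eq]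

lemma semiconjBy_pow_of_semiconjBy_succ {M : G} {a : ℕ → G} {n : ℕ}
    (hM : ∀ j, 1 ≤ j → j + 1 ≤ n → SemiconjBy M (a j) (a (j + 1))) {j : ℕ} (hj : 1 ≤ j) :
    ∀ {k : ℕ}, j + k ≤ n → SemiconjBy (M ^ k) (a j) (a (j + k))
  | 0, _ => by simp
  | k + 1, hk => by
    rw [pow_succ']
    exact (hM (j + k) (by omega) hk).mul_left (semiconjBy_pow_of_semiconjBy_succ hM hj (by omega))

lemma semiconjBy_conj_pow_iff {M v : G} {a : ℕ → G} {n : ℕ}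
    (hM : ∀ j, 1 ≤ j → j + 1 ≤ n → SemiconjBy M (a j) (a (j + 1))) {k : ℕ} (hk : k + 2 ≤ n) :
    SemiconjBy (M ^ k * v * (M ^ k)⁻¹ * (M ^ (k + 1) * v⁻¹ * (M ^ (k + 1))⁻¹))
        (a (k + 1)) (a (k + 2)) ↔ SemiconjBy ⁅v, M⁆ (a 1) (a 2) := by
  have conj_pow {j : ℕ} (hj : 1 ≤ j) (hjk : j + k ≤ n) : a (k + j) = M ^ k * a j * (M ^ k)⁻¹ := by
    rw [add_comm, eq_mul_inv_iff_mul_eq, (semiconjBy_pow_of_semiconjBy_succ hM hj hjk).eq]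
  rw [conj_pow (j := 2) (by omega) (by omega), conj_pow (j := 1) le_rfl (by omega),
    ← SemiconjBy.conj_iff (a := ⁅v, M⁆) (b := M ^ k), commutatorElement_def]
  congr! 1
  group

lemma semiconjBy_mul_left_iff {w d b c e : G} (h : SemiconjBy d b c) :
    SemiconjBy (w * d) b e ↔ SemiconjBy w c e := by
  unfold SemiconjBy
  rw [mul_assoc, h.eq, ← mul_assoc, ← mul_assoc, mul_left_inj]

lemma commutatorElement_mul_mul_mul {s t y N : G} (hy : s * y = y * s⁻¹) (hNs : Commute N s)
    (hNy : Commute N y) : ⁅s * y, s * t * N⁆ = y * t * y⁻¹ * (s * t * s)⁻¹ := by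
  have hN : Commute N (s * y) := hNs.mul_right hNy
  calc ⁅s * y, s * t * N⁆ = s * y * (s * t) * (N * (s * y)⁻¹) * N⁻¹ * (s * t)⁻¹ := by
        rw [commutatorElement_def]; group
    _ = s * y * s * t * y⁻¹ * s⁻¹ * t⁻¹ * s⁻¹ := by rw [hN.inv_right.eq]; group
    _ = y * t * y⁻¹ * (s * t * s)⁻¹ := by rw [hy]; group

lemma semiconjBy_commutatorElement_iff {s t y N : G} (hst : s * t * s = t * s * t)
    (hy : s * y = y * s⁻¹) (hNs : Commute N s) (hNy : Commute N y) :
    SemiconjBy ⁅s * y, s * t * N⁆ s t ↔ Commute t (y * t * y⁻¹) := by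
  have hΔ : SemiconjBy (s * t * s)⁻¹ s t := by
    rw [SemiconjBy.inv_symm_left_iff, SemiconjBy]
    conv_rhs => rw [hst]
    group
  rw [commutatorElement_mul_mul_mul hy hNs hNy, semiconjBy_mul_left_iff hΔ, Commute.symm_iff]
  rfl

lemma commute_conj_inv_iff {t y : G} : Commute t (y⁻¹ * t * y) ↔ Commute t (y * t * y⁻¹) := by
  rw [← Commute.conj_iff y, Commute.symm_iff]
  group

end

theorem stmt_14_general {G : Type*} [Group G] (g : ℕ) (a : ℕ → G) (y : G)
    (hA1 : ∀ i j, 1 ≤ i → j ≤ g - 1 → i + 1 < j → a i * a j = a j * a i)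
    (hA2 : ∀ i, 1 ≤ i → i ≤ g - 2 → a i * a (i + 1) * a i = a (i + 1) * a i * a (i + 1))
    (hC1' : ∀ i, 3 ≤ i → i ≤ g - 1 → a i * y = y * a i)
    (hC4' : a 1 * y = y * (a 1)⁻¹)
    (M u1 : G) (u : ℕ → G)
    (hM : M = ((List.range' 1 (g - 1)).map a).prod)
    (hu1 : u1 = a 1 * y)
    (hu : ∀ i, 1 ≤ i → i ≤ g - 1 → u i = M ^ (i - 1) * u1 ^ ((-1 : ℤ) ^ (i - 1)) * (M ^ (i - 1))⁻¹) :
    ∀ i, 1 ≤ i → i ≤ g - 2 →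
      (a (i + 1) * u i * u (i + 1) = u i * u (i + 1) * a i ↔
        a 2 * (y * a 2 * y⁻¹) = (y * a 2 * y⁻¹) * a 2) := by
  intro i hi hig
  obtain ⟨k, rfl⟩ : ∃ k, i = k + 1 := ⟨i - 1, by omega⟩
  have ha : BraidRelations a (g - 1) := ⟨hA1, fun j hj hjg => hA2 j hj (by omega)⟩
  have hshift (j : ℕ) (hj : 1 ≤ j) (hjg : j + 1 ≤ g - 1) : SemiconjBy M (a j) (a (j + 1)) :=
    hM ▸ ha.semiconjBy_prod hj hjg
  set N := ((List.range' 3 (g - 3)).map a).prod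
  have hMN : M = a 1 * a 2 * N := by
    rw [hM, show g - 1 = 0 + 2 + (g - 3) by omega, prod_map_range'_one_add_two_add,
      List.range'_zero, List.map_nil, List.prod_nil, one_mul]
  have hNa : Commute N (a 1) :=
    (commute_prod_map_range' fun j hj hjg => hA1 1 j le_rfl (by omega) (by omega)).symm
  have hNy : Commute N y :=
    (commute_prod_map_range' fun j hj hjg => (hC1' j hj (by omega)).symm).symm
  have hb : a 1 * a 2 * a 1 = a 2 * a 1 * a 2 := hA2 1 le_rfl (by omega)
  have hC3 : (a (k + 1 + 1) * u (k + 1) * u (k + 1 + 1) = u (k + 1) * u (k + 1 + 1) * a (k + 1))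
      ↔ SemiconjBy ⁅u1 ^ ((-1 : ℤ) ^ k), M⁆ (a 1) (a 2) := by
    rw [← semiconjBy_conj_pow_iff hshift (k := k) (by omega), hu (k + 1) (by omega) (by omega),
      hu (k + 1 + 1) (by omega) (by omega), Nat.add_sub_cancel, Nat.add_sub_cancel,
      pow_succ (-1 : ℤ), mul_neg_one, zpow_neg, SemiconjBy, eq_comm, mul_assoc (a _)]
  rw [hC3, hMN, hu1]
  rcases neg_one_pow_eq_or ℤ k with h | h
  · rw [h, zpow_one, semiconjBy_commutatorElement_iff hb hC4' hNa hNy]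
    rfl
  · have hy' : a 1 * y⁻¹ = y⁻¹ * (a 1)⁻¹ := by
      rw [← mul_inv_rev, hC4', mul_inv_rev, inv_inv]
    rw [h, zpow_neg_one, mul_inv_rev, ← hy',
      semiconjBy_commutatorElement_iff hb hy' hNa hNy.inv_right, inv_inv, commute_conj_inv_iff]
    rfl

/-- STATEMENT 13: after the substitutions `u₁ = a₁ y` and
`uᵢ = M^(i-1) u₁^((-1)^(i-1)) M^(-(i-1))`, each relation of the family (C3)
is equivalent to relation (C2'). -/
theorem stmt_14 {G : Type*} [Group G] (g : ℕ) (hg : 3 ≤ g) (a : ℕ → G) (y : G)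
    (hA1 : ∀ i j, 1 ≤ i → j ≤ g - 1 → i + 1 < j → a i * a j = a j * a i)
    (hA2 : ∀ i, 1 ≤ i → i ≤ g - 2 → a i * a (i + 1) * a i = a (i + 1) * a i * a (i + 1))
    (hC1' : ∀ i, 3 ≤ i → i ≤ g - 1 → a i * y = y * a i)
    (hC4' : a 1 * y = y * (a 1)⁻¹)
    (M u1 : G) (u : ℕ → G)
    (hM : M = ((List.range' 1 (g - 1)).map a).prod)
    (hu1 : u1 = a 1 * y)
    (hu : ∀ i, 1 ≤ i → i ≤ g - 1 → u i = M ^ (i - 1) * u1 ^ ((-1 : ℤ) ^ (i - 1)) * (M ^ (i - 1))⁻¹) :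
    ∀ i, 1 ≤ i → i ≤ g - 2 →
      (a (i + 1) * u i * u (i + 1) = u i * u (i + 1) * a i ↔
        a 2 * (y * a 2 * y⁻¹) = (y * a 2 * y⁻¹) * a 2) :=
  stmt_14_general g a y hA1 hA2 hC1' hC4' M u1 u hM hu1 hu
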